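/- arXiv:2507.11122 — 2 statements merged into one kernel-verified Lean document; each statement's English description precedes it below -/
import Mathlib

section
/- For n ≥ 4 and 3 ≤ r ≤ ⌈(n+1)/2⌉, the number of transformations α ∈ RD*_n with |im(α)| = r equals the binomial coefficient C(n+1, 2r−1). -/
open Finset

namespace ORDPaper

/-- `f` is a full transformation of the chain `{1,…,n}`, acting as the identity outside. -/
def IsTrans (n : ℕ) (f : ℕ → ℕ) : Prop :=
  (∀ x, 1 ≤ x → x ≤ n → 1 ≤ f x ∧ f x ≤ n) ∧ ∀ x, ¬(1 ≤ x ∧ x ≤ n) → f x = x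

/-- Composition of transformations, written left to right: `x(αβ) = (xα)β`. -/
def comp (f g : ℕ → ℕ) : ℕ → ℕ := fun x => g (f x)

/-- The value of `f` at the cyclic successor of `i` (so `(n+1)α = 1α`). -/
def nxt (n : ℕ) (f : ℕ → ℕ) (i : ℕ) : ℕ := if i = n then f 1 else f (i + 1)

/-- `(1α,…,nα)` is cyclic: there is at most one descent (cyclically). -/
def Cyclic (n : ℕ) (f : ℕ → ℕ) : Prop :=
  ((Finset.Icc 1 n).filter (fun i => nxt n f i < f i)).card ≤ 1

/-- `(1α,…,nα)` is anti-cyclic: there is at most one ascent (cyclically). -/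
def AntiCyclic (n : ℕ) (f : ℕ → ℕ) : Prop :=
  ((Finset.Icc 1 n).filter (fun i => f i < nxt n f i)).card ≤ 1

/-- Order-decreasing on `{1,…,n}`. -/
def Decreasing (n : ℕ) (f : ℕ → ℕ) : Prop := ∀ x, 1 ≤ x → x ≤ n → f x ≤ x

/-- Image of `{1,…,n}` under `f`. -/
def im (n : ℕ) (f : ℕ → ℕ) : Finset ℕ := (Finset.Icc 1 n).image f

/-- Fixed points of `f` in `{1,…,n}`. -/
def fixSet (n : ℕ) (f : ℕ → ℕ) : Finset ℕ := (Finset.Icc 1 n).filter (fun x => f x = x)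

/-- The semigroup `D_n` of order-decreasing full transformations. -/
def Dn (n : ℕ) : Set (ℕ → ℕ) := {f | IsTrans n f ∧ Decreasing n f}

/-- Orientation-preserving order-decreasing transformations. -/
def OPD (n : ℕ) : Set (ℕ → ℕ) := {f | f ∈ Dn n ∧ Cyclic n f}

/-- Oriented order-decreasing transformations. -/
def ORDn (n : ℕ) : Set (ℕ → ℕ) := {f | f ∈ Dn n ∧ (Cyclic n f ∨ AntiCyclic n f)}

/-- `RD*_n`: orientation-reversing, order-decreasing, not orientation-preserving. -/
def RDstar (n : ℕ) : Set (ℕ → ℕ) := {f | f ∈ Dn n ∧ AntiCyclic n f ∧ ¬ Cyclic n f}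

/-- `ORD(n,r)`. -/
def ORDr (n r : ℕ) : Set (ℕ → ℕ) := {f | f ∈ ORDn n ∧ (im n f).card ≤ r}

/-- `OPD(n,r)`. -/
def OPDr (n r : ℕ) : Set (ℕ → ℕ) := {f | f ∈ OPD n ∧ (im n f).card ≤ r}

/-- The order-reversing degree: `min(X_n \ 1α⁻¹)`. -/
noncomputable def ordDeg (n : ℕ) (f : ℕ → ℕ) : ℕ := sInf {x | 1 ≤ x ∧ x ≤ n ∧ f x ≠ 1}

/-- Minimum of the preimage of `x` under `f` inside `{1,…,n}`. -/
noncomputable def preMin (n : ℕ) (f : ℕ → ℕ) (x : ℕ) : ℕ := sInf {y | 1 ≤ y ∧ y ≤ n ∧ f y = x}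

/-- Membership in the subsemigroup generated by `A`. -/
inductive gen (A : Set (ℕ → ℕ)) : (ℕ → ℕ) → Prop
  | base {f} : f ∈ A → gen A f
  | mul {f g} : gen A f → gen A g → gen A (comp f g)

/-- Rank of a transformation semigroup `S`. -/
noncomputable def rank (S : Set (ℕ → ℕ)) : ℕ :=
  sInf {k | ∃ A : Set (ℕ → ℕ), A ⊆ S ∧ A.Finite ∧ A.ncard = k ∧ {f | gen A f} = S}

/-- `r̂ = min{r, ⌈(n+1)/2⌉}`. -/
def rhat (n r : ℕ) : ℕ := min r ((n + 2) / 2)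

/-- `ρ_m` fixes `1,…,m` and sends `m+1,…,n` to `1`. -/
def rho (n m : ℕ) : ℕ → ℕ := fun x =>
  if ¬(1 ≤ x ∧ x ≤ n) then x else if x ≤ m then x else 1

/-- The order-preserving degree `opd(α) = max{m : α|_{X_m} is order-preserving}`. -/
noncomputable def opd (n : ℕ) (f : ℕ → ℕ) : ℕ :=
  sSup {m | m ≤ n ∧ ∀ x y, 1 ≤ x → x ≤ y → y ≤ m → f x ≤ f y}

/-- The set `C = (⋃_{m=r+1}^n B_m) ∪ {ρ_2,…,ρ_r}`. -/
def Cset (n r : ℕ) : Set (ℕ → ℕ) :=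
  {f | (f ∈ OPD n ∧ comp f f = f ∧ (im n f).card = r ∧ r + 1 ≤ opd n f ∧ opd n f ≤ n)
    ∨ (∃ m, 2 ≤ m ∧ m ≤ r ∧ f = rho n m)}

/-- The map `λ_{m,r}`: sends `[1,m-1]` to `1`, maps `x ∈ [m, min(2m-p-2,n)]` to `2m-x`
(where `p = max{0, m-r}` is `m - r` in truncated subtraction), and the rest of `[1,n]` to `1`. -/
def lam (n r m : ℕ) : ℕ → ℕ := fun x =>
  if ¬(1 ≤ x ∧ x ≤ n) then x
  else if x < m then 1
  else if x ≤ min (2 * m - (m - r) - 2) n then 2 * m - x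
  else 1

/-- `G_{n,r} = {λ_{m,r} : 3 ≤ m ≤ n-1}`. -/
def Gset (n r : ℕ) : Set (ℕ → ℕ) := {f | ∃ m, 3 ≤ m ∧ m ≤ n - 1 ∧ f = lam n r m}

/-- `L_{m,r}`. -/
def Lset (n r m : ℕ) : Set (ℕ → ℕ) :=
  {f | f ∈ ORDn n ∧ im n f = im n (lam n r m) ∧
    ∀ x ∈ im n (lam n r m), preMin n f x = preMin n (lam n r m) x}

/-- `α_{m,r}`: the idempotent fixing `{1} ∪ [m, 2m-p-2]` and sending the rest of `[1,n]` to `1`. -/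
def alphaMap (n r m : ℕ) : ℕ → ℕ := fun x =>
  if ¬(1 ≤ x ∧ x ≤ n) then x
  else if x < m then 1
  else if x ≤ 2 * m - (m - r) - 2 then x
  else 1

/-- `β_{m,r}`: sends `[1,m-1]` to `1`, maps `m,…,2m-p-3` order-reversingly to `m,…,p+3`,
and `[2m-p-2, n]` to `p+2`. -/
def betaMap (n r m : ℕ) : ℕ → ℕ := fun x =>
  if ¬(1 ≤ x ∧ x ≤ n) then x
  else if x < m then 1
  else if x ≤ 2 * m - (m - r) - 3 then 2 * m - x
  else (m - r) + 2

/-- `S` is a subsemigroup of `T`. -/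
def IsSubsemigroupOf (S T : Set (ℕ → ℕ)) : Prop :=
  S ⊆ T ∧ ∀ f ∈ S, ∀ g ∈ S, comp f g ∈ S

/-- `S` is a maximal subsemigroup of `T`. -/
def IsMaximalSubsemigroupOf (S T : Set (ℕ → ℕ)) : Prop :=
  IsSubsemigroupOf S T ∧ S ≠ T ∧ ∀ U, IsSubsemigroupOf U T → S ⊆ U → U = S ∨ U = T


/-!
A map `f ∈ J_{n,r}` equals `1` on `[1, j]`, has its only cyclic ascent at `j` and weakly
decreases on `[j + 1, n]`; leaving each of its `r - 1` values above `1` is a descent, so its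
cyclic sequence changes value at exactly `r` positions. The `r - 1` values, all `≤ j + 1`,
together with the `r` change positions shifted by `2`, all `≥ j + 2`, form a `(2r - 1)`-subset
of `[2, n + 2]`. Conversely, reading the `r - 1` smallest elements of such a subset as values and
the `r` largest as change positions recovers a unique map of this shape; as `r ≥ 3`, it has at
least two descents, so it lies in `J_{n,r}`. Hence `|J_{n,r}| = C(n + 1, 2r - 1)`.
-/

section Enumeration

variable (Y : Finset ℕ)

lemma finite_ofPred_mem : (Set.ofPred (· ∈ Y)).Finite := Y.finite_toSet

@[simp] lemma finite_ofPred_mem_toFinset : (finite_ofPred_mem Y).toFinset = Y := by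
  ext; simp

variable {Y}

lemma nth_mem_finset {k : ℕ} (hk : k < #Y) : Nat.nth (· ∈ Y) k ∈ Y :=
  Nat.nth_mem_of_lt_card (finite_ofPred_mem Y) (by simpa using hk)

lemma nth_lt_nth_finset {k l : ℕ} (hkl : k < l) (hl : l < #Y) :
    Nat.nth (· ∈ Y) k < Nat.nth (· ∈ Y) l :=
  Nat.nth_lt_nth_of_lt_card (finite_ofPred_mem Y) hkl (by simpa using hl)

lemma count_nth_finset {k : ℕ} (hk : k < #Y) : Nat.count (· ∈ Y) (Nat.nth (· ∈ Y) k) = k :=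
  Nat.count_nth_of_lt_card_finite (finite_ofPred_mem Y) (by simpa using hk)

lemma count_mem_eq_card_filter_lt (m : ℕ) : Nat.count (· ∈ Y) m = #{y ∈ Y | y < m} := by
  rw [Nat.count_eq_card_filter_range]
  congr 1
  ext y
  simp [and_comm]

lemma count_mem_le_card (m : ℕ) : Nat.count (· ∈ Y) m ≤ #Y :=
  (count_mem_eq_card_filter_lt m).trans_le (card_filter_le _ _)

lemma card_filter_count_lt {m : ℕ} (hm : m ≤ #Y) :
    #{y ∈ Y | Nat.count (· ∈ Y) y < m} = m := by
  rw [← card_range m]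
  refine card_nbij' (Nat.count (· ∈ Y)) (Nat.nth (· ∈ Y)) ?_ ?_ ?_ ?_
  · intro y hy
    simpa using (mem_filter.1 hy).2
  · intro k hk
    have hk : k < m := by simpa using hk
    simpa [count_nth_finset (hk.trans_le hm), hk] using nth_mem_finset (hk.trans_le hm)
  · intro y hy
    exact Nat.nth_count (mem_filter.1 hy).1
  · intro k hk
    exact count_nth_finset ((mem_range.1 hk).trans_le hm)

end Enumeration

lemma card_filter_lt_add_card_filter_gt {α : Type*} [LinearOrder α] {s : Finset α} {a : α}
    (ha : a ∈ s) : #{b ∈ s | b < a} + #{b ∈ s | a < b} + 1 = #s := by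
  have : {b ∈ s | ¬a < b} = insert a {b ∈ s | b < a} := by
    ext b
    simp only [mem_filter, mem_insert, not_lt]
    constructor
    · rintro ⟨hb, hba⟩
      exact hba.eq_or_lt.imp id fun h => ⟨hb, h⟩
    · rintro (rfl | ⟨hb, hba⟩)
      exacts [⟨ha, le_rfl⟩, ⟨hb, hba.le⟩]
  rw [← card_filter_add_card_filter_not (s := s) (a < ·), this,
    card_insert_of_notMem (by simp), add_comm #{b ∈ s | b < a}]
  ring

lemma antitoneOn_Icc_of_succ_le {f : ℕ → ℕ} {a b : ℕ}
    (h : ∀ i, a ≤ i → i < b → f (i + 1) ≤ f i) : AntitoneOn f (Set.Icc a b) :=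
  antitoneOn_of_succ_le Set.ordConnected_Icc fun i _ hi hi' => h i hi.1 (by
    simp only [Order.succ_eq_add_one, Set.mem_Icc] at hi'; omega)

def ascents (n : ℕ) (f : ℕ → ℕ) : Finset ℕ := {i ∈ Icc 1 n | f i < nxt n f i}

def descents (n : ℕ) (f : ℕ → ℕ) : Finset ℕ := {i ∈ Icc 1 n | nxt n f i < f i}

def changes (n : ℕ) (f : ℕ → ℕ) : Finset ℕ := {i ∈ Icc 1 n | nxt n f i ≠ f i}

lemma nxt_of_ne {n i : ℕ} {f : ℕ → ℕ} (h : i ≠ n) : nxt n f i = f (i + 1) := if_neg h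

lemma nxt_self (n : ℕ) (f : ℕ → ℕ) : nxt n f n = f 1 := if_pos rfl

lemma changes_eq_ascents_union_descents (n : ℕ) (f : ℕ → ℕ) :
    changes n f = ascents n f ∪ descents n f := by
  rw [ascents, descents, ← filter_or]
  exact filter_congr fun i _ => ne_iff_lt_or_gt.trans or_comm

/-- The shape of the maps in `J_{n,r}`, with `j` their unique cyclic ascent. -/
structure RisesOnceAt (n j : ℕ) (f : ℕ → ℕ) : Prop where
  lt : j < n
  eq_one : ∀ x, 1 ≤ x → x ≤ j → f x = 1
  two_le : 2 ≤ f (j + 1)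
  le_succ : f (j + 1) ≤ j + 1
  antitoneOn : AntitoneOn f (Set.Icc (j + 1) n)
  one_le : ∀ x, 1 ≤ x → x ≤ n → 1 ≤ f x

lemma exists_risesOnceAt {n : ℕ} {f : ℕ → ℕ} (hf : f ∈ Dn n) (hasc : AntiCyclic n f)
    (him : 2 ≤ #(im n f)) : ∃ j, RisesOnceAt n j f := by
  obtain ⟨⟨hrange, -⟩, hdec⟩ := hf
  have hn : 1 ≤ n := by
    by_contra hn
    simp [im, Icc_eq_empty_of_lt (show n < 1 by omega)] at him
  have hf1 : f 1 = 1 := le_antisymm (hdec 1 le_rfl hn) (hrange 1 le_rfl hn).1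
  have hstep : ∀ i, 1 ≤ i → i < n → i ∉ ascents n f → f (i + 1) ≤ f i := fun i hi hin hi' => by
    simpa [ascents, hi, hin.le, nxt_of_ne hin.ne] using hi'
  have hone_of_antitone : ∀ m ≤ n, AntitoneOn f (Set.Icc 1 m) →
      ∀ x, 1 ≤ x → x ≤ m → f x = 1 := fun m hm hanti x hx hxm => by
    have := hanti ⟨le_rfl, hx.trans hxm⟩ ⟨hx, hxm⟩ hx
    have := (hrange x hx (hxm.trans hm)).1
    omega
  obtain ⟨j, hj⟩ : (ascents n f).Nonempty := by
    by_contra hempty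
    rw [not_nonempty_iff_eq_empty] at hempty
    have hall := hone_of_antitone n le_rfl <| antitoneOn_Icc_of_succ_le fun i hi hin =>
      hstep i hi hin (hempty ▸ notMem_empty i)
    have : im n f ⊆ {1} := by
      intro y hy
      obtain ⟨x, hx, rfl⟩ := mem_image.1 hy
      rw [mem_Icc] at hx
      exact mem_singleton.2 (hall x hx.1 hx.2)
    have := card_le_card this
    rw [card_singleton] at this
    omega
  have huniq : ∀ i ∈ ascents n f, i = j := fun i hi => card_le_one.1 hasc i hi j hj
  obtain ⟨hjIcc, hjasc⟩ := mem_filter.1 hj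
  rw [mem_Icc] at hjIcc
  have hjn : j < n := by
    refine lt_of_le_of_ne hjIcc.2 fun hjn => ?_
    rw [hjn, nxt_self, hf1] at hjasc
    have := (hrange n hn le_rfl).1
    omega
  rw [nxt_of_ne hjn.ne] at hjasc
  have hhead := hone_of_antitone j hjn.le <| antitoneOn_Icc_of_succ_le fun i hi hij =>
    hstep i hi (by omega) fun hi' => by have := huniq i hi'; omega
  refine ⟨j, hjn, hhead, ?_, hdec (j + 1) (by omega) hjn, ?_, fun x hx hxn => (hrange x hx hxn).1⟩
  · have := hhead j hjIcc.1 le_rfl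
    omega
  · exact antitoneOn_Icc_of_succ_le fun i hi hin =>
      hstep i (by omega) hin fun hi' => by have := huniq i hi'; omega

namespace RisesOnceAt

variable {n j : ℕ} {f : ℕ → ℕ} (h : RisesOnceAt n j f)
include h

lemma pos : 1 ≤ j := by
  have := h.two_le
  have := h.le_succ
  omega

lemma map_one : f 1 = 1 := h.eq_one 1 le_rfl h.pos

lemma le_of_succ_le {x : ℕ} (hx : j + 1 ≤ x) (hxn : x ≤ n) : f x ≤ f (j + 1) :=
  h.antitoneOn ⟨le_rfl, by omega⟩ ⟨hx, hxn⟩ hx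

lemma ascents_eq : ascents n f = {j} := by
  have hj1 := h.pos
  have hjn := h.lt
  ext i
  simp only [ascents, mem_filter, mem_Icc, mem_singleton]
  constructor
  · rintro ⟨⟨hi, hin⟩, hasc⟩
    rcases lt_trichotomy i j with hij | rfl | hij
    · rw [nxt_of_ne (show i ≠ n by omega), h.eq_one i hi hij.le,
        h.eq_one (i + 1) (by omega) hij] at hasc
      omega
    · rfl
    · by_cases hin' : i = n
      · rw [hin', nxt_self, h.map_one] at hasc
        have := h.one_le n (by omega) le_rfl
        omega
      · rw [nxt_of_ne hin'] at hasc
        have := h.antitoneOn ⟨by omega, hin⟩ ⟨by omega, by omega⟩ (Nat.le_add_right i 1)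
        omega
  · rintro rfl
    refine ⟨⟨hj1, h.lt.le⟩, ?_⟩
    rw [nxt_of_ne h.lt.ne, h.eq_one i hj1 le_rfl]
    exact h.two_le

lemma changes_eq : changes n f = insert j (descents n f) := by
  rw [changes_eq_ascents_union_descents, h.ascents_eq, insert_eq]

lemma mem_Icc_of_mem_descents {i : ℕ} (hi : i ∈ descents n f) : i ∈ Icc (j + 1) n := by
  obtain ⟨hiIcc, hdesc⟩ := mem_filter.1 hi
  rw [mem_Icc] at hiIcc ⊢
  refine ⟨Nat.lt_of_not_le fun hij => ?_, hiIcc.2⟩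
  rw [nxt_of_ne (show i ≠ n by have := h.lt; omega), h.eq_one i hiIcc.1 hij] at hdesc
  rcases hij.lt_or_eq with hij | rfl
  · rw [h.eq_one (i + 1) (by omega) hij] at hdesc
    omega
  · have := h.two_le
    omega

lemma lt_iff_of_mem_descents {i x : ℕ} (hi : i ∈ descents n f) (hx : j + 1 ≤ x) (hxn : x ≤ n) :
    i < x ↔ f x < f i := by
  have hiIcc := mem_Icc.1 (h.mem_Icc_of_mem_descents hi)
  constructor
  · intro hix
    have hdesc := (mem_filter.1 hi).2
    rw [nxt_of_ne (show i ≠ n by omega)] at hdesc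
    exact (h.antitoneOn ⟨by omega, by omega⟩ ⟨hx, hxn⟩ hix).trans_lt hdesc
  · intro hfx
    by_contra! hxi
    exact absurd (h.antitoneOn ⟨hx, hxn⟩ ⟨hiIcc.1, hiIcc.2⟩ hxi) hfx.not_ge

lemma bijOn_descents : Set.BijOn f (descents n f) ((im n f).erase 1) := by
  refine ⟨fun i hi => ?_, fun i hi i' hi' hii' => ?_, fun a ha => ?_⟩
  · obtain ⟨hiIcc, hdesc⟩ := mem_filter.1 (mem_coe.1 hi)
    have hi' := mem_Icc.1 (h.mem_Icc_of_mem_descents hi)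
    have : 1 ≤ nxt n f i := by
      by_cases hin : i = n
      · rw [hin, nxt_self, h.map_one]
      · rw [nxt_of_ne hin]
        exact h.one_le (i + 1) (by omega) (by omega)
    exact mem_erase.2 ⟨by omega, mem_image_of_mem f hiIcc⟩
  · have hi'Icc := mem_Icc.1 (h.mem_Icc_of_mem_descents hi')
    have hiIcc := mem_Icc.1 (h.mem_Icc_of_mem_descents hi)
    refine le_antisymm (not_lt.1 fun hlt => ?_) (not_lt.1 fun hlt => ?_)
    · exact ((h.lt_iff_of_mem_descents hi' hiIcc.1 hiIcc.2).1 hlt).ne hii'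
    · exact ((h.lt_iff_of_mem_descents hi hi'Icc.1 hi'Icc.2).1 hlt).ne' hii'
  · obtain ⟨ha1, hyim⟩ := mem_erase.1 ha
    obtain ⟨y, hy, rfl⟩ := mem_image.1 hyim
    rw [mem_Icc] at hy
    have hy' : j + 1 ≤ y := Nat.lt_of_not_le fun hyj => ha1 (h.eq_one y hy.1 hyj)
    set S := {z ∈ Icc (j + 1) n | f y ≤ f z}
    have hyS : y ∈ S := mem_filter.2 ⟨mem_Icc.2 ⟨hy', hy.2⟩, le_rfl⟩
    obtain ⟨hiIcc, hfi⟩ := mem_filter.1 (S.max'_mem ⟨y, hyS⟩)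
    set i := S.max' ⟨y, hyS⟩
    rw [mem_Icc] at hiIcc
    have hfiy : f i = f y :=
      le_antisymm (h.antitoneOn ⟨hy', hy.2⟩ ⟨hiIcc.1, hiIcc.2⟩ (S.le_max' y hyS)) hfi
    refine ⟨i, mem_filter.2 ⟨mem_Icc.2 ⟨by omega, hiIcc.2⟩, ?_⟩, hfiy⟩
    by_cases hin : i = n
    · have := h.one_le y hy.1 hy.2
      rw [hin, nxt_self, h.map_one, ← hin, hfiy]
      omega
    · have hnotS : i + 1 ∉ S := fun hS => by have := S.le_max' _ hS; omega
      rw [nxt_of_ne hin, hfiy]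
      simpa [S, hiIcc.1, hin, Nat.lt_of_le_of_ne hiIcc.2 hin, (by omega : j ≤ i)] using hnotS

lemma one_mem_im : 1 ∈ im n f :=
  mem_image.2 ⟨1, mem_Icc.2 ⟨le_rfl, by have := h.lt; have := h.pos; omega⟩, h.map_one⟩

lemma card_descents_add_one : #(descents n f) + 1 = #(im n f) := by
  rw [h.bijOn_descents.finsetCard_eq, card_erase_add_one h.one_mem_im]

lemma card_changes : #(changes n f) = #(im n f) := by
  rw [h.changes_eq, card_insert_of_notMem fun hj => by
    have := mem_Icc.1 (h.mem_Icc_of_mem_descents hj); omega, h.card_descents_add_one]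

lemma card_filter_descents_lt {x : ℕ} (hx : j + 1 ≤ x) (hxn : x ≤ n) :
    #{i ∈ descents n f | i < x} = #{a ∈ (im n f).erase 1 | f x < a} := by
  refine card_nbij f (fun i hi => ?_) (h.bijOn_descents.injOn.mono fun i hi => ?_)
    (fun a ha => ?_)
  · obtain ⟨hi, hix⟩ := mem_filter.1 (mem_coe.1 hi)
    exact mem_filter.2 ⟨h.bijOn_descents.mapsTo hi, (h.lt_iff_of_mem_descents hi hx hxn).1 hix⟩
  · exact (mem_filter.1 (mem_coe.1 hi)).1
  · obtain ⟨ha, hxa⟩ := mem_filter.1 (mem_coe.1 ha)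
    obtain ⟨i, hi, rfl⟩ := h.bijOn_descents.surjOn ha
    exact ⟨i, mem_filter.2 ⟨hi, (h.lt_iff_of_mem_descents hi hx hxn).2 hxa⟩, rfl⟩

lemma map_le {x : ℕ} (hx : 1 ≤ x) (hxn : x ≤ n) : f x ≤ x := by
  by_cases hxj : x ≤ j
  · rw [h.eq_one x hx hxj]
    exact hx
  · have := h.le_of_succ_le (by omega) hxn
    have := h.le_succ
    omega

lemma mem_RDstar (hout : ∀ x, ¬(1 ≤ x ∧ x ≤ n) → f x = x) (him : 3 ≤ #(im n f)) :
    f ∈ RDstar n := by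
  refine ⟨⟨⟨fun x hx hxn => ⟨h.one_le x hx hxn, (h.map_le hx hxn).trans hxn⟩, hout⟩,
    fun x hx hxn => h.map_le hx hxn⟩, ?_, fun hcyc => ?_⟩
  · rw [AntiCyclic, ← ascents, h.ascents_eq, card_singleton]
  · have : #(descents n f) ≤ 1 := hcyc
    have := h.card_descents_add_one
    omega

end RisesOnceAt

def code (n : ℕ) (f : ℕ → ℕ) : Finset ℕ := (im n f).erase 1 ∪ (changes n f).image (· + 2)

/-- The value at `x` of the map encoded by `Y`, read off from the number `k` of elements of `Y`
that are `≤ x + 1`. -/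
noncomputable def codeValue (r : ℕ) (Y : Finset ℕ) (k : ℕ) : ℕ :=
  if r ≤ k ∧ k < 2 * r - 1 then Nat.nth (· ∈ Y) (2 * r - 2 - k) else 1

noncomputable def decode (n r : ℕ) (Y : Finset ℕ) (x : ℕ) : ℕ :=
  if 1 ≤ x ∧ x ≤ n then codeValue r Y (Nat.count (· ∈ Y) (x + 2)) else x

lemma decode_of_mem {n r x : ℕ} (Y : Finset ℕ) (hx : 1 ≤ x) (hxn : x ≤ n) :
    decode n r Y x = codeValue r Y (Nat.count (· ∈ Y) (x + 2)) :=
  if_pos ⟨hx, hxn⟩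

namespace RisesOnceAt

variable {n j : ℕ} {f : ℕ → ℕ} (h : RisesOnceAt n j f)
include h

lemma mem_Icc_of_mem_im_erase {a : ℕ} (ha : a ∈ (im n f).erase 1) : a ∈ Icc 2 (j + 1) := by
  obtain ⟨i, hi, rfl⟩ := h.bijOn_descents.surjOn ha
  have hiIcc := mem_Icc.1 (h.mem_Icc_of_mem_descents hi)
  have := h.le_of_succ_le hiIcc.1 hiIcc.2
  have := h.le_succ
  have := h.one_le i (by omega) hiIcc.2
  have := (mem_erase.1 (h.bijOn_descents.mapsTo hi)).1
  exact mem_Icc.2 ⟨by omega, by omega⟩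

lemma mem_Icc_of_mem_changes {i : ℕ} (hi : i ∈ changes n f) : i ∈ Icc j n := by
  rw [h.changes_eq, mem_insert] at hi
  rcases hi with rfl | hi
  · exact mem_Icc.2 ⟨le_rfl, h.lt.le⟩
  · have := mem_Icc.1 (h.mem_Icc_of_mem_descents hi)
    exact mem_Icc.2 ⟨by omega, this.2⟩

lemma disjoint_code : Disjoint ((im n f).erase 1) ((changes n f).image (· + 2)) := by
  refine disjoint_left.2 fun a ha ha' => ?_
  obtain ⟨i, hi, rfl⟩ := mem_image.1 ha'
  have := mem_Icc.1 (h.mem_Icc_of_mem_im_erase ha)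
  have := mem_Icc.1 (h.mem_Icc_of_mem_changes hi)
  omega

lemma code_subset : code n f ⊆ Icc 2 (n + 2) := by
  intro a ha
  rcases mem_union.1 ha with ha | ha
  · have := mem_Icc.1 (h.mem_Icc_of_mem_im_erase ha)
    have := h.lt
    exact mem_Icc.2 ⟨by omega, by omega⟩
  · obtain ⟨i, hi, rfl⟩ := mem_image.1 ha
    have := mem_Icc.1 (h.mem_Icc_of_mem_changes hi)
    exact mem_Icc.2 ⟨by omega, by omega⟩

lemma card_code : #(code n f) = 2 * #(im n f) - 1 := by
  rw [code, card_union_of_disjoint h.disjoint_code, card_erase_of_mem h.one_mem_im,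
    card_image_of_injective _ (add_left_injective 2), h.card_changes]
  have := card_pos.2 ⟨1, h.one_mem_im⟩
  omega

lemma count_code (m : ℕ) :
    Nat.count (· ∈ code n f) m =
      #{a ∈ (im n f).erase 1 | a < m} + #{i ∈ changes n f | i + 2 < m} := by
  rw [count_mem_eq_card_filter_lt, code, filter_union, card_union_of_disjoint
    (h.disjoint_code.mono (filter_subset _ _) (filter_subset _ _)), filter_image,
    card_image_of_injective _ (add_left_injective 2)]

lemma count_code_add_two_of_le {x : ℕ} (hxj : x ≤ j) :
    Nat.count (· ∈ code n f) (x + 2) < #(im n f) := by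
  have hC : #{i ∈ changes n f | i + 2 < x + 2} = 0 := card_eq_zero.2 <| filter_eq_empty_iff.2
    fun i hi => by have := mem_Icc.1 (h.mem_Icc_of_mem_changes hi); omega
  have := card_filter_le ((im n f).erase 1) (· < x + 2)
  have := card_erase_add_one h.one_mem_im
  rw [h.count_code, hC]
  omega

lemma count_code_add_two_of_lt {x : ℕ} (hjx : j < x) (hxn : x ≤ n) :
    Nat.count (· ∈ code n f) (x + 2) = #(im n f) + #{a ∈ (im n f).erase 1 | f x < a} := by
  have hA : {a ∈ (im n f).erase 1 | a < x + 2} = (im n f).erase 1 := filter_true_of_mem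
    fun a ha => by have := mem_Icc.1 (h.mem_Icc_of_mem_im_erase ha); omega
  have hC : #{i ∈ changes n f | i + 2 < x + 2} = #{a ∈ (im n f).erase 1 | f x < a} + 1 := by
    simp only [add_lt_add_iff_right]
    rw [h.changes_eq, filter_insert, if_pos hjx, card_insert_of_notMem fun hj => by
      have := mem_Icc.1 (h.mem_Icc_of_mem_descents (mem_filter.1 hj).1); omega,
      h.card_filter_descents_lt hjx hxn]
  rw [h.count_code, hA, hC, card_erase_of_mem h.one_mem_im]
  have := card_pos.2 ⟨1, h.one_mem_im⟩
  omega

lemma decode_code_apply {x : ℕ} (hx : 1 ≤ x) (hxn : x ≤ n) :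
    decode n #(im n f) (code n f) x = f x := by
  rw [decode_of_mem _ hx hxn]
  by_cases hxj : x ≤ j
  · rw [codeValue, if_neg (by have := h.count_code_add_two_of_le hxj; omega), h.eq_one x hx hxj]
  have hcount := h.count_code_add_two_of_lt (by omega) hxn
  set A := (im n f).erase 1
  have hA : #A + 1 = #(im n f) := card_erase_add_one h.one_mem_im
  rcases (h.one_le x hx hxn).eq_or_lt with hfx | hfx
  · have hA1 : {a ∈ A | f x < a} = A := filter_true_of_mem fun a ha => by
      have := mem_Icc.1 (h.mem_Icc_of_mem_im_erase ha); omega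
    rw [hcount, hA1, codeValue, if_neg (by omega), ← hfx]
  · have hfxA : f x ∈ A := mem_erase.2 ⟨by omega, mem_image_of_mem f (mem_Icc.2 ⟨hx, hxn⟩)⟩
    have hsplit := card_filter_lt_add_card_filter_gt hfxA
    -- `f x` is preceded in the code exactly by the values below it
    have hcount_fx : Nat.count (· ∈ code n f) (f x) = #{a ∈ A | a < f x} := by
      rw [h.count_code, add_eq_left, card_eq_zero, filter_eq_empty_iff]
      intro i hi
      have := mem_Icc.1 (h.mem_Icc_of_mem_changes hi)
      have := mem_Icc.1 (h.mem_Icc_of_mem_im_erase hfxA)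
      omega
    rw [hcount, codeValue, if_pos (by omega),
      show 2 * #(im n f) - 2 - (#(im n f) + #{a ∈ A | f x < a}) = #{a ∈ A | a < f x} by omega,
      ← hcount_fx]
    exact Nat.nth_count (mem_union_left _ hfxA)

lemma decode_code (hout : ∀ x, ¬(1 ≤ x ∧ x ≤ n) → f x = x) :
    decode n #(im n f) (code n f) = f := by
  funext x
  by_cases hx : 1 ≤ x ∧ x ≤ n
  · exact h.decode_code_apply hx.1 hx.2
  · rw [decode, if_neg hx, hout x hx]

end RisesOnceAt

section Decode

variable {n r : ℕ} {Y : Finset ℕ} (hY : Y ⊆ Icc 2 (n + 2)) (hcard : #Y = 2 * r - 1)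
include hY hcard

lemma one_le_codeValue (k : ℕ) : 1 ≤ codeValue r Y k := by
  unfold codeValue
  split_ifs with hk
  · have := mem_Icc.1 (hY (nth_mem_finset (show 2 * r - 2 - k < #Y by omega)))
    omega
  · exact le_rfl

lemma codeValue_antitoneOn : AntitoneOn (codeValue r Y) (Set.Ici r) := by
  intro a ha b hb hab
  by_cases hb' : b < 2 * r - 1
  · rw [codeValue, codeValue, if_pos ⟨hb, hb'⟩, if_pos ⟨ha, hab.trans_lt hb'⟩]
    rcases (show 2 * r - 2 - b ≤ 2 * r - 2 - a by omega).eq_or_lt with heq | hlt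
    · rw [heq]
    · exact (nth_lt_nth_finset hlt (by omega)).le
  · rw [codeValue, if_neg (by omega)]
    exact one_le_codeValue hY hcard a

lemma codeValue_succ_ne_iff (hr : 2 ≤ r) {k : ℕ} (hk : k < 2 * r - 1) :
    codeValue r Y (k + 1) ≠ codeValue r Y k ↔ r - 1 ≤ k := by
  have hnth : ∀ m < #Y, 2 ≤ Nat.nth (· ∈ Y) m := fun m hm =>
    (mem_Icc.1 (hY (nth_mem_finset hm))).1
  unfold codeValue
  split_ifs with hk1 hk0 hk0
  · have := nth_lt_nth_finset (Y := Y) (show 2 * r - 2 - (k + 1) < 2 * r - 2 - k by omega)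
      (by omega)
    omega
  · have := hnth (2 * r - 2 - (k + 1)) (by omega)
    omega
  · have := hnth (2 * r - 2 - k) (by omega)
    omega
  · simp only [ne_eq, not_true_eq_false, false_iff, not_le]
    omega

lemma nxt_decode (hr : 2 ≤ r) {i : ℕ} (hi : 1 ≤ i) (hin : i ≤ n) :
    nxt n (decode n r Y) i = codeValue r Y (Nat.count (· ∈ Y) (i + 3)) := by
  by_cases hin' : i = n
  -- at the wrap-around both sides are `1`, as `count (n + 3) = #Y = 2 * r - 1`
  · have h3 : Nat.count (· ∈ Y) 3 ≤ 1 := by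
      rw [count_mem_eq_card_filter_lt]
      refine (card_le_card (t := {2}) fun y hy => ?_).trans (card_singleton 2).le
      have := mem_Icc.1 (hY (mem_filter.1 hy).1)
      have := (mem_filter.1 hy).2
      rw [mem_singleton]
      omega
    have hall : Nat.count (· ∈ Y) (n + 3) = #Y := by
      rw [count_mem_eq_card_filter_lt, filter_true_of_mem fun y hy => by
        have := mem_Icc.1 (hY hy); omega]
    rw [hin', nxt_self, decode_of_mem Y le_rfl (by omega), show 1 + 2 = 3 from rfl, hall,
      codeValue, codeValue, if_neg (by omega), if_neg (by omega)]
  · rw [nxt_of_ne hin', decode_of_mem Y (by omega) (by omega)]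

lemma risesOnceAt_decode (hr : 2 ≤ r) :
    RisesOnceAt n (Nat.nth (· ∈ Y) (r - 1) - 2) (decode n r Y) := by
  set b := Nat.nth (· ∈ Y) (r - 1)
  have hbmem : b ∈ Y := nth_mem_finset (by omega)
  have hbY := mem_Icc.1 (hY hbmem)
  have hprev : Nat.nth (· ∈ Y) (r - 2) < b := nth_lt_nth_finset (by omega) (by omega)
  have hprevY := mem_Icc.1 (hY (nth_mem_finset (show r - 2 < #Y by omega)))
  have hlast : b < Nat.nth (· ∈ Y) (2 * r - 2) := nth_lt_nth_finset (by omega) (by omega)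
  have hlastY := mem_Icc.1 (hY (nth_mem_finset (show 2 * r - 2 < #Y by omega)))
  have hcount_b : Nat.count (· ∈ Y) b = r - 1 := count_nth_finset (by omega)
  have hcount_succ : Nat.count (· ∈ Y) (b + 1) = r := by
    rw [Nat.count_succ, hcount_b, if_pos hbmem]
    omega
  clear_value b
  have hcount_ge : ∀ x, b - 1 ≤ x → r ≤ Nat.count (· ∈ Y) (x + 2) := fun x hx =>
    hcount_succ ▸ Nat.count_monotone _ (by omega)
  have hrise : decode n r Y (b - 2 + 1) = Nat.nth (· ∈ Y) (r - 2) := by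
    rw [decode_of_mem Y (by omega) (by omega), show b - 2 + 1 + 2 = b + 1 by omega,
      hcount_succ, codeValue, if_pos (by omega), show 2 * r - 2 - r = r - 2 by omega]
  refine ⟨by omega, fun x hx hxj => ?_, by omega, by omega, fun x hx y hy hxy => ?_,
    fun x hx hxn => ?_⟩
  · have : Nat.count (· ∈ Y) (x + 2) ≤ r - 1 := hcount_b ▸ Nat.count_monotone _ (by omega)
    rw [decode_of_mem Y hx (by omega), codeValue, if_neg (by omega)]
  · obtain ⟨hx1, hxn⟩ := hx
    obtain ⟨hy1, hyn⟩ := hy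
    rw [decode_of_mem Y (by omega) hxn, decode_of_mem Y (by omega) hyn]
    exact codeValue_antitoneOn hY hcard (hcount_ge x (by omega)) (hcount_ge y (by omega))
      (Nat.count_monotone _ (by omega))
  · rw [decode_of_mem Y hx hxn]
    exact one_le_codeValue hY hcard _

lemma mem_changes_decode_iff (hr : 2 ≤ r) {i : ℕ} (hi : 1 ≤ i) (hin : i ≤ n) :
    i ∈ changes n (decode n r Y) ↔ i + 2 ∈ Y ∧ r - 1 ≤ Nat.count (· ∈ Y) (i + 2) := by
  rw [changes, mem_filter, nxt_decode hY hcard hr hi hin, decode_of_mem Y hi hin,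
    show i + 3 = i + 2 + 1 from rfl, Nat.count_succ]
  simp only [mem_Icc, hi, hin, and_self, true_and]
  split_ifs with hmem
  · have := count_mem_le_card (Y := Y) (i + 2 + 1)
    rw [Nat.count_succ, if_pos hmem] at this
    simpa [hmem] using codeValue_succ_ne_iff hY hcard hr (show _ < 2 * r - 1 by omega)
  · simp [hmem]

lemma image_changes_decode (hr : 2 ≤ r) :
    (changes n (decode n r Y)).image (· + 2) = {y ∈ Y | r - 1 ≤ Nat.count (· ∈ Y) y} := by
  ext y
  simp only [mem_image, mem_filter]
  constructor
  · rintro ⟨i, hi, rfl⟩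
    have hiIcc := mem_Icc.1 (mem_filter.1 hi).1
    exact (mem_changes_decode_iff hY hcard hr hiIcc.1 hiIcc.2).1 hi
  · rintro ⟨hyY, hy⟩
    have hfirst : Nat.nth (· ∈ Y) 0 < y := Nat.nth_lt_of_lt_count (by omega)
    have := mem_Icc.1 (hY (nth_mem_finset (show 0 < #Y by omega)))
    have := mem_Icc.1 (hY hyY)
    refine ⟨y - 2, (mem_changes_decode_iff hY hcard hr (by omega) (by omega)).2 ?_, by omega⟩
    rw [Nat.sub_add_cancel (by omega)]
    exact ⟨hyY, hy⟩

lemma card_im_decode (hr : 2 ≤ r) : #(im n (decode n r Y)) = r := by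
  rw [← (risesOnceAt_decode hY hcard hr).card_changes,
    ← card_image_of_injective _ (add_left_injective 2), image_changes_decode hY hcard hr]
  have := card_filter_add_card_filter_not (s := Y) (fun y => Nat.count (· ∈ Y) y < r - 1)
  rw [card_filter_count_lt (by omega)] at this
  simp only [not_lt] at this
  omega

lemma im_decode_erase (hr : 2 ≤ r) :
    (im n (decode n r Y)).erase 1 = {y ∈ Y | Nat.count (· ∈ Y) y < r - 1} := by
  refine eq_of_subset_of_card_le (fun a ha => ?_) ?_
  · obtain ⟨ha1, him⟩ := mem_erase.1 ha
    obtain ⟨x, hx, rfl⟩ := mem_image.1 him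
    rw [mem_Icc] at hx
    rw [decode_of_mem Y hx.1 hx.2, codeValue] at ha1 ⊢
    split_ifs at ha1 ⊢ with hk
    · refine mem_filter.2 ⟨nth_mem_finset (by omega), ?_⟩
      rw [count_nth_finset (by omega)]
      omega
    · exact absurd rfl ha1
  · rw [card_filter_count_lt (by omega), card_erase_of_mem
      (risesOnceAt_decode hY hcard hr).one_mem_im, card_im_decode hY hcard hr]

lemma code_decode (hr : 2 ≤ r) : code n (decode n r Y) = Y := by
  rw [code, im_decode_erase hY hcard hr, image_changes_decode hY hcard hr, ← filter_or,
    filter_true_of_mem fun y _ => lt_or_ge _ _]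

end Decode

lemma setOf_mem_RDstar_card_im_eq {n r : ℕ} (hr : 3 ≤ r) :
    {f | f ∈ RDstar n ∧ #(im n f) = r} =
      decode n r '' ((Icc 2 (n + 2)).powersetCard (2 * r - 1) : Set (Finset ℕ)) := by
  ext f
  constructor
  · rintro ⟨hf, rfl⟩
    obtain ⟨j, hj⟩ := exists_risesOnceAt hf.1 hf.2.1 (by omega)
    exact ⟨code n f, mem_powersetCard.2 ⟨hj.code_subset, hj.card_code⟩, hj.decode_code hf.1.1.2⟩
  · rintro ⟨Y, hY, rfl⟩
    obtain ⟨hYsub, hYcard⟩ := mem_powersetCard.1 hY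
    have him := card_im_decode hYsub hYcard (by omega)
    exact ⟨(risesOnceAt_decode hYsub hYcard (by omega)).mem_RDstar (fun x hx => if_neg hx)
      (by omega), him⟩

lemma injOn_decode {n r : ℕ} (hr : 2 ≤ r) :
    Set.InjOn (decode n r) ((Icc 2 (n + 2)).powersetCard (2 * r - 1) : Set (Finset ℕ)) := by
  intro Y hY Z hZ hYZ
  obtain ⟨hYsub, hYcard⟩ := mem_powersetCard.1 hY
  obtain ⟨hZsub, hZcard⟩ := mem_powersetCard.1 hZ
  rw [← code_decode hYsub hYcard hr, hYZ, code_decode hZsub hZcard hr]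

theorem card_J_general (n r : ℕ) (hr3 : 3 ≤ r) :
    {f | f ∈ RDstar n ∧ (im n f).card = r}.ncard = Nat.choose (n + 1) (2 * r - 1) := by
  rw [setOf_mem_RDstar_card_im_eq hr3, (injOn_decode (by omega)).ncard_image,
    Set.ncard_coe_finset, card_powersetCard, Nat.card_Icc, show n + 2 + 1 - 2 = n + 1 by omega]

theorem card_J (n r : ℕ) (hn : 4 ≤ n) (hr3 : 3 ≤ r) (hr : r ≤ (n + 2) / 2) :
    {f | f ∈ RDstar n ∧ (im n f).card = r}.ncard = Nat.choose (n + 1) (2 * r - 1) :=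
  card_J_general n r hr3

end ORDPaper
end

section
/- For n ≥ 4, the cardinality of RD*_n is 2^n − (n³ + 5n + 6)/6. -/
/-!
A map `f ∈ RD*_n` is `1` on `[1, n - k]` and non-increasing with `f x ≤ x` on `(n - k, n]`.
It is encoded by `S = {f x + (n - x) | n - k < x ≤ n} ⊆ [1, n]`, and recovered from the sorted
elements `s₀ < s₁ < ⋯` of `S` as `f (n - m) = s_m - m`. Under this encoding the cyclic descents
of `f` correspond to the points where membership in `S ∪ {0}` switches on, so `f` is not
orientation-preserving iff `S ∪ {0}` switches on at least twice. Recording all the points of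
`[1, n]` where membership in `S ∪ {0}` switches is a bijection on the subsets of `[1, n]`; as `0`
is a member, switching on `r` times means `2r` or `2r + 1` switches, so the condition becomes
having at least four elements. Hence `|RD*_n| = 2^n - ∑_{k<4} C(n, k)`.
-/

open Finset

namespace ORDPaper

open Nat (nth)

section Switches

def rises (U : Finset ℕ) (m : ℕ) : Finset ℕ := (Icc 1 m).filter fun y => y - 1 ∉ U ∧ y ∈ U

def switches (U : Finset ℕ) (m : ℕ) : Finset ℕ := (Icc 1 m).filter fun y => ¬(y - 1 ∈ U ↔ y ∈ U)

lemma card_filter_Icc_one_add_one (p : ℕ → Prop) [DecidablePred p] (m : ℕ) :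
    #((Icc 1 (m + 1)).filter p) = #((Icc 1 m).filter p) + if p (m + 1) then 1 else 0 := by
  rw [← insert_Icc_right_eq_Icc_add_one (by omega), filter_insert]
  split_ifs <;> simp

lemma card_switches {U : Finset ℕ} (h0 : 0 ∈ U) (m : ℕ) :
    #(switches U m) = 2 * #(rises U m) + if m ∈ U then 0 else 1 := by
  induction m with
  | zero => simp [switches, rises, h0]
  | succ m ih =>
    rw [switches, rises, card_filter_Icc_one_add_one, card_filter_Icc_one_add_one, ← switches,
      ← rises, ih]
    by_cases hm : m ∈ U <;> by_cases hm' : m + 1 ∈ U <;> simp [hm, hm']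
    omega

lemma mem_iff_of_switches_eq {U V : Finset ℕ} (hU : 0 ∈ U) (hV : 0 ∈ V) {m : ℕ}
    (h : switches U m = switches V m) : ∀ y ≤ m, (y ∈ U ↔ y ∈ V) := by
  intro y hy
  induction y with
  | zero => simp [hU, hV]
  | succ y ih =>
    have hs := congrArg (y + 1 ∈ ·) h
    simp only [switches, Finset.mem_filter, mem_Icc, Nat.add_sub_cancel, eq_iff_iff, hy,
      true_and, le_add_iff_nonneg_left, zero_le] at hs
    have := ih (by omega)
    tauto

lemma switches_insert_zero_injOn (n : ℕ) :
    Set.InjOn (fun S => switches (insert 0 S) n) ((Icc 1 n).powerset : Set (Finset ℕ)) := by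
  intro S hS T hT h
  simp only [coe_powerset, Set.mem_preimage, Set.mem_powerset_iff, coe_subset] at hS hT
  have key := mem_iff_of_switches_eq (mem_insert_self 0 S) (mem_insert_self 0 T) h
  ext y
  by_cases hy : y ≤ n
  · have h0S : 0 ∉ S := fun h => by simpa using hS h
    have h0T : 0 ∉ T := fun h => by simpa using hT h
    rcases Nat.eq_zero_or_pos y with rfl | hpos
    · simp [h0S, h0T]
    · simpa [Finset.mem_insert, hpos.ne'] using key y hy
  · constructor <;> intro hmem
    · exact absurd (mem_Icc.mp (hS hmem)).2 hy
    · exact absurd (mem_Icc.mp (hT hmem)).2 hy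

lemma image_switches_insert_zero_powerset (n : ℕ) :
    (Icc 1 n).powerset.image (fun S => switches (insert 0 S) n) = (Icc 1 n).powerset := by
  refine eq_of_subset_of_card_le (fun T hT => ?_)
    (card_image_of_injOn (switches_insert_zero_injOn n)).ge
  obtain ⟨S, -, rfl⟩ := mem_image.mp hT
  exact mem_powerset.mpr (filter_subset _ _)

lemma card_filter_two_le_card_rises (n : ℕ) :
    #((Icc 1 n).powerset.filter fun S => 2 ≤ #(rises (insert 0 S) n)) =
      #((Icc 1 n).powerset.filter fun T => 4 ≤ #T) := by
  set P := (Icc 1 n).powerset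
  calc #(P.filter fun S => 2 ≤ #(rises (insert 0 S) n))
      = #(P.filter fun S => 4 ≤ #(switches (insert 0 S) n)) := by
        congr 1
        refine filter_congr fun S _ => ?_
        rw [card_switches (mem_insert_self 0 S)]
        split_ifs <;> omega
    _ = #((P.filter fun S => 4 ≤ #(switches (insert 0 S) n)).image
          fun S => switches (insert 0 S) n) :=
        (card_image_of_injOn ((switches_insert_zero_injOn n).mono
          (coe_subset.mpr (filter_subset _ _)))).symm
    _ = #(P.filter fun T => 4 ≤ #T) := by
        rw [← filter_image (p := fun T => 4 ≤ #T), image_switches_insert_zero_powerset]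

end Switches

lemma card_powerset_filter_card_lt {α : Type*} (s : Finset α) (r : ℕ) :
    #(s.powerset.filter fun T => #T < r) = ∑ k ∈ range r, (#s).choose k := by
  rw [card_eq_sum_card_fiberwise (f := card) (t := range r)
    fun T hT => mem_range.mpr (Finset.mem_filter.mp hT).2]
  refine sum_congr rfl fun k hk => ?_
  rw [filter_filter, ← card_powersetCard, powersetCard_eq_filter]
  congr 1
  refine filter_congr fun T _ => ?_
  simp only [mem_range] at hk
  omega

lemma six_mul_sum_range_four_choose (n : ℕ) :
    6 * ∑ k ∈ range 4, n.choose k = n ^ 3 + 5 * n + 6 := by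
  rcases n with _ | _ | m
  · rfl
  · rfl
  · have h2 : (m + 2).choose 2 * 2 = (m + 2) * (m + 1) := by
      simpa using Nat.choose_succ_right_eq (m + 2) 1
    have h3 : (m + 2).choose 3 * 3 = (m + 2).choose 2 * m := by
      simpa using Nat.choose_succ_right_eq (m + 2) 2
    simp only [sum_range_succ, range_zero, sum_empty, Nat.choose_zero_right, Nat.choose_one_right]
    nlinarith

lemma card_powerset_filter_four_le_card (n : ℕ) :
    #((Icc 1 n).powerset.filter fun T => 4 ≤ #T) = 2 ^ n - (n ^ 3 + 5 * n + 6) / 6 := by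
  have hsplit := card_filter_add_card_filter_not (s := (Icc 1 n).powerset) fun T => 4 ≤ #T
  have hsmall := card_powerset_filter_card_lt (Icc 1 n) 4
  simp only [not_le, card_powerset, Nat.card_Icc, Nat.add_sub_cancel] at hsplit hsmall
  rw [← six_mul_sum_range_four_choose, Nat.mul_div_cancel_left _ (by norm_num), ← hsmall]
  omega

section SortedElements

variable {S : Finset ℕ} {m k : ℕ}

lemma nth_mem_finset_s8 (hm : m < #S) : nth (· ∈ S) m ∈ S :=
  Nat.nth_mem_of_lt_card S.finite_toSet (by simpa using hm)

lemma nth_lt_nth_finset_s8 (hmk : m < k) (hk : k < #S) : nth (· ∈ S) m < nth (· ∈ S) k :=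
  Nat.nth_lt_nth_of_lt_card S.finite_toSet hmk (by simpa using hk)

lemma nth_le_nth_finset (hmk : m ≤ k) (hk : k < #S) : nth (· ∈ S) m ≤ nth (· ∈ S) k :=
  Nat.nth_le_nth_of_lt_card S.finite_toSet hmk (by simpa using hk)

lemma eq_of_nth_eq_nth_finset (hm : m < #S) (hk : k < #S) (h : nth (· ∈ S) m = nth (· ∈ S) k) :
    m = k := by
  rcases lt_trichotomy m k with hmk | rfl | hkm
  · exact absurd h (nth_lt_nth_finset_s8 hmk hk).ne
  · rfl
  · exact absurd h (nth_lt_nth_finset_s8 hkm hm).ne'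

lemma exists_lt_card_nth_eq_finset {y : ℕ} (hy : y ∈ S) : ∃ m < #S, nth (· ∈ S) m = y := by
  simpa using Nat.exists_lt_card_finite_nth_eq S.finite_toSet hy

lemma nth_zero_le_of_mem {y : ℕ} (hy : y ∈ S) : nth (· ∈ S) 0 ≤ y := by
  rw [Nat.nth_zero]
  exact Nat.sInf_le hy

lemma add_one_le_nth_finset (h0 : 0 ∉ S) (hm : m < #S) : m + 1 ≤ nth (· ∈ S) m := by
  induction m with
  | zero =>
    have := nth_mem_finset_s8 hm
    grind
  | succ m ih =>
    have := nth_lt_nth_finset_s8 (lt_add_one m) hm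
    have := ih (by omega)
    omega

lemma card_image_range_of_strictMonoOn {g : ℕ → ℕ} (hg : StrictMonoOn g (Set.Iio k)) :
    #((range k).image g) = k := by
  rw [card_image_of_injOn (by simpa using hg.injOn), card_range]

lemma nth_image_range {g : ℕ → ℕ} (hg : StrictMonoOn g (Set.Iio k)) (hm : m < k) :
    nth (· ∈ (range k).image g) m = g m := by
  have hcard := card_image_range_of_strictMonoOn hg
  have hset : {n | ∀ hf : (Set.ofPred (· ∈ (range k).image g)).Finite, n < #hf.toFinset} =
      Set.Iio k := by
    have htoFinset (hf : (Set.ofPred (· ∈ (range k).image g)).Finite) :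
        hf.toFinset = (range k).image g := by ext; simp
    ext n
    simp only [Set.mem_ofPred_eq, htoFinset, hcard, Set.mem_Iio]
    exact ⟨fun h => h ((range k).image g).finite_toSet, fun h _ => h⟩
  symm
  refine Nat.eq_nth_of_strictMonoOn_of_mapsTo_of_surjOn g ?_ ?_ ?_ (by rw [hset]; exact hm)
  all_goals rw [hset]
  · intro y hy
    obtain ⟨a, ha, rfl⟩ := mem_image.mp (Set.mem_ofPred_eq ▸ hy)
    exact ⟨a, mem_range.mp ha, rfl⟩
  · exact fun a ha => mem_image_of_mem g (mem_range.mpr ha)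
  · exact hg

lemma eq_of_nth_eq_nth {T : Finset ℕ} (hc : #S = #T)
    (h : ∀ m < #S, nth (· ∈ S) m = nth (· ∈ T) m) : S = T := by
  ext y
  constructor
  · intro hy
    obtain ⟨m, hm, rfl⟩ := exists_lt_card_nth_eq_finset hy
    rw [h m hm]
    exact nth_mem_finset_s8 (hc ▸ hm)
  · intro hy
    obtain ⟨m, hm, rfl⟩ := exists_lt_card_nth_eq_finset hy
    rw [← h m (hc ▸ hm)]
    exact nth_mem_finset_s8 (hc ▸ hm)

end SortedElements

lemma apply_one_of_mem_Dn {n : ℕ} {f : ℕ → ℕ} (hf : f ∈ Dn n) (hn : 1 ≤ n) : f 1 = 1 :=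
  le_antisymm (hf.2 1 le_rfl hn) (hf.1.1 1 le_rfl hn).1

/-- Inverse of the encoding `f ↦ {f x + (n - x) | n - k < x ≤ n}`. -/
noncomputable def mapOfSet (n : ℕ) (S : Finset ℕ) (x : ℕ) : ℕ :=
  if x = 0 ∨ n < x then x else if n - x < #S then nth (· ∈ S) (n - x) - (n - x) else 1

section MapOfSet

variable {n : ℕ} {S : Finset ℕ} {m x : ℕ}

lemma zero_notMem_of_subset_Icc (hS : S ⊆ Icc 1 n) : 0 ∉ S := fun h => by simpa using hS h

lemma card_le_of_subset_Icc (hS : S ⊆ Icc 1 n) : #S ≤ n := by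
  simpa using card_le_card hS

lemma nth_le_of_subset_Icc (hS : S ⊆ Icc 1 n) (hm : m < #S) : nth (· ∈ S) m ≤ n :=
  (mem_Icc.mp (hS (nth_mem_finset_s8 hm))).2

lemma mapOfSet_eq_one (hx1 : 1 ≤ x) (hxn : x ≤ n) (hx : #S ≤ n - x) : mapOfSet n S x = 1 := by
  rw [mapOfSet, if_neg (by omega), if_neg (by omega)]

lemma mapOfSet_sub (hS : S ⊆ Icc 1 n) (hm : m < #S) :
    mapOfSet n S (n - m) = nth (· ∈ S) m - m := by
  have := card_le_of_subset_Icc hS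
  rw [mapOfSet, if_neg (by omega), if_pos (by omega), Nat.sub_sub_self (by omega)]

lemma mapOfSet_sub_le (hS : S ⊆ Icc 1 n) (hm : m + 1 < #S) :
    mapOfSet n S (n - m) ≤ mapOfSet n S (n - (m + 1)) := by
  rw [mapOfSet_sub hS (by omega), mapOfSet_sub hS hm]
  have := nth_lt_nth_finset_s8 (lt_add_one m) hm
  omega

lemma mapOfSet_mem_Dn (hS : S ⊆ Icc 1 n) : mapOfSet n S ∈ Dn n := by
  refine ⟨⟨fun x hx1 hxn => ?_, fun x hx => by rw [mapOfSet, if_pos (by omega)]⟩,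
    fun x hx1 hxn => ?_⟩ <;>
  · by_cases hx : n - x < #S
    · obtain ⟨m, rfl⟩ : ∃ m, x = n - m := ⟨n - x, by omega⟩
      rw [mapOfSet_sub hS (by omega)]
      have := add_one_le_nth_finset (zero_notMem_of_subset_Icc hS) (show m < #S by omega)
      have := nth_le_of_subset_Icc hS (show m < #S by omega)
      omega
    · rw [mapOfSet_eq_one hx1 hxn (by omega)]
      omega

lemma antiCyclic_mapOfSet (hS : S ⊆ Icc 1 n) : AntiCyclic n (mapOfSet n S) := by
  have hD := mapOfSet_mem_Dn hS
  refine card_le_one.mpr fun i hi j hj => ?_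
  suffices h : ∀ i ∈ (Icc 1 n).filter (fun i => mapOfSet n S i < nxt n (mapOfSet n S) i),
      i = n - #S from (h i hi).trans (h j hj).symm
  intro i hi
  rw [Finset.mem_filter, mem_Icc, nxt] at hi
  obtain ⟨⟨hi1, hin⟩, hlt⟩ := hi
  split_ifs at hlt with hi_eq
  · have := (hD.1.1 i hi1 hin).1
    rw [apply_one_of_mem_Dn hD (by omega)] at hlt
    omega
  · by_contra hne
    rcases Nat.lt_or_gt_of_ne hne with hlow | hhigh
    · rw [mapOfSet_eq_one hi1 hin (by omega), mapOfSet_eq_one (by omega) (by omega) (by omega)]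
        at hlt
      exact lt_irrefl 1 hlt
    · obtain ⟨m, rfl⟩ : ∃ m, i = n - (m + 1) := ⟨n - i - 1, by omega⟩
      have := mapOfSet_sub_le hS (m := m) (by omega)
      rw [show n - (m + 1) + 1 = n - m by omega] at hlt
      omega

lemma nxt_mapOfSet_sub_lt_iff (hS : S ⊆ Icc 1 n) (hm : m < #S) :
    nxt n (mapOfSet n S) (n - m) < mapOfSet n S (n - m) ↔
      nth (· ∈ S) m ∈ rises (insert 0 S) n := by
  have h0 := zero_notMem_of_subset_Icc hS
  have hmem := nth_mem_finset_s8 hm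
  have hcard := card_le_of_subset_Icc hS
  simp only [rises, Finset.mem_filter, Finset.mem_insert, hS hmem, hmem, or_true, and_true,
    true_and]
  rw [mapOfSet_sub hS hm, nxt]
  rcases m with _ | j
  · have h1 := add_one_le_nth_finset h0 hm
    rw [if_pos (by omega), apply_one_of_mem_Dn (mapOfSet_mem_Dn hS) (by omega)]
    have hlow : nth (· ∈ S) 0 - 1 ∉ S := fun h => by
      have := nth_zero_le_of_mem h
      omega
    simp only [hlow, or_false]
    omega
  · have hj : j < #S := by omega
    have hlt := nth_lt_nth_finset_s8 (lt_add_one j) hm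
    have h1 := add_one_le_nth_finset h0 hj
    rw [if_neg (by omega), show n - (j + 1) + 1 = n - j by omega, mapOfSet_sub hS hj]
    constructor
    · intro hdesc hmem'
      rcases hmem' with h | h
      · omega
      · have := Nat.le_nth_of_lt_nth_succ (p := (· ∈ S)) (k := j)
          (show nth (· ∈ S) (j + 1) - 1 < _ by omega) h
        omega
    · intro hnot
      have : nth (· ∈ S) j ≠ nth (· ∈ S) (j + 1) - 1 := fun h =>
        hnot (Or.inr (h ▸ nth_mem_finset_s8 hj))
      omega

lemma card_descents_mapOfSet (hS : S ⊆ Icc 1 n) :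
    #((Icc 1 n).filter fun i => nxt n (mapOfSet n S) i < mapOfSet n S i) =
      #(rises (insert 0 S) n) := by
  have hcard := card_le_of_subset_Icc hS
  have hD := mapOfSet_mem_Dn hS
  have hdesc_tail : ∀ i ∈ (Icc 1 n).filter fun i => nxt n (mapOfSet n S) i < mapOfSet n S i,
      n - i < #S ∧ i = n - (n - i) := by
    intro i hi
    rw [Finset.mem_filter, mem_Icc] at hi
    obtain ⟨⟨hi1, hin⟩, hlt⟩ := hi
    refine ⟨?_, by omega⟩
    by_contra! htail
    rw [mapOfSet_eq_one hi1 hin htail] at hlt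
    have : 1 ≤ nxt n (mapOfSet n S) i := by
      rw [nxt]
      split_ifs <;> exact (hD.1.1 _ (by omega) (by omega)).1
    omega
  refine card_nbij (fun i => nth (· ∈ S) (n - i)) (fun i hi => ?_) (fun i hi j hj h => ?_)
    (fun y hy => ?_)
  · rw [mem_coe] at hi ⊢
    obtain ⟨hm, hi_eq⟩ := hdesc_tail i hi
    have hdesc := (Finset.mem_filter.mp hi).2
    rw [hi_eq] at hdesc
    exact (nxt_mapOfSet_sub_lt_iff hS hm).mp hdesc
  · rw [mem_coe] at hi hj
    obtain ⟨hi', hi_eq⟩ := hdesc_tail i hi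
    obtain ⟨hj', hj_eq⟩ := hdesc_tail j hj
    rw [hi_eq, hj_eq, eq_of_nth_eq_nth_finset hi' hj' h]
  · have hyS : y ∈ S := by
      simp only [mem_coe, rises, Finset.mem_filter, Finset.mem_insert, mem_Icc] at hy
      exact hy.2.2.resolve_left (by omega)
    obtain ⟨m, hm, rfl⟩ := exists_lt_card_nth_eq_finset hyS
    refine ⟨n - m, ?_, by simp only; rw [Nat.sub_sub_self (by omega)]⟩
    rw [mem_coe, Finset.mem_filter, mem_Icc]
    exact ⟨⟨by omega, by omega⟩, (nxt_mapOfSet_sub_lt_iff hS hm).mpr hy⟩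

lemma cyclic_mapOfSet_iff (hS : S ⊆ Icc 1 n) :
    Cyclic n (mapOfSet n S) ↔ #(rises (insert 0 S) n) ≤ 1 := by
  rw [Cyclic, card_descents_mapOfSet hS]

end MapOfSet

section Injectivity

variable {n : ℕ} {S T : Finset ℕ}

lemma eq_Icc_of_nth_card_sub_one_le (h0 : 0 ∉ T) (hT : 0 < #T)
    (h : nth (· ∈ T) (#T - 1) ≤ #T) : T = Icc 1 #T := by
  refine eq_of_subset_of_card_le (fun y hy => ?_) (by simp)
  obtain ⟨m, hm, rfl⟩ := exists_lt_card_nth_eq_finset hy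
  have := nth_le_nth_finset (S := T) (show m ≤ #T - 1 by omega) (by omega)
  have := add_one_le_nth_finset h0 hm
  exact mem_Icc.mpr ⟨by omega, by omega⟩

lemma rises_insert_zero_Icc (l n : ℕ) : rises (insert 0 (Icc 1 l)) n = ∅ := by
  ext y
  simp only [rises, Finset.mem_filter, Finset.mem_insert, mem_Icc, notMem_empty, iff_false]
  omega

lemma card_le_of_mapOfSet_eq (hT : T ⊆ Icc 1 n) (hrises : (rises (insert 0 T) n).Nonempty)
    (h : mapOfSet n S = mapOfSet n T) : #T ≤ #S := by
  by_contra! hlt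
  have hTn := card_le_of_subset_Icc hT
  have hval := congrFun h (n - (#T - 1))
  rw [mapOfSet_eq_one (by omega) (by omega) (by omega), mapOfSet_sub hT (by omega)] at hval
  have hIcc := eq_Icc_of_nth_card_sub_one_le (zero_notMem_of_subset_Icc hT) (by omega)
    (by omega)
  rw [hIcc, rises_insert_zero_Icc] at hrises
  exact not_nonempty_empty hrises

lemma mapOfSet_injOn :
    Set.InjOn (mapOfSet n) {S | S ⊆ Icc 1 n ∧ (rises (insert 0 S) n).Nonempty} := by
  rintro S ⟨hS, hSr⟩ T ⟨hT, hTr⟩ h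
  have hc : #S = #T :=
    le_antisymm (card_le_of_mapOfSet_eq hS hSr h.symm) (card_le_of_mapOfSet_eq hT hTr h)
  refine eq_of_nth_eq_nth hc fun m hm => ?_
  have hval := congrFun h (n - m)
  rw [mapOfSet_sub hS hm, mapOfSet_sub hT (hc ▸ hm)] at hval
  have := add_one_le_nth_finset (zero_notMem_of_subset_Icc hS) hm
  have := add_one_le_nth_finset (zero_notMem_of_subset_Icc hT) (hc ▸ hm)
  omega

end Injectivity

section Surjectivity

variable {n : ℕ} {f : ℕ → ℕ}

lemma exists_eq_one_then_nonincreasing (hf : f ∈ Dn n) (ha : AntiCyclic n f) :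
    ∃ k ≤ n, (∀ x, 1 ≤ x → x ≤ n - k → f x = 1) ∧ ∀ i, n - k < i → i < n → f (i + 1) ≤ f i := by
  by_cases hall : ∃ x, 1 ≤ x ∧ x ≤ n ∧ f x ≠ 1
  swap
  · exact ⟨0, Nat.zero_le n, fun x h1 h2 => of_not_not fun h => hall ⟨x, h1, by omega, h⟩,
      fun i h1 h2 => by omega⟩
  classical
  obtain ⟨hw1, hwn, hfw⟩ := Nat.find_spec hall
  set w := Nat.find hall
  have hbelow : ∀ x, 1 ≤ x → x < w → f x = 1 := fun x h1 h2 => by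
    by_contra h
    exact Nat.find_min hall h2 ⟨h1, by omega, h⟩
  have hw2 : 2 ≤ w := by
    by_contra
    have : w = 1 := by omega
    exact hfw (this ▸ apply_one_of_mem_Dn hf (by omega))
  refine ⟨n + 1 - w, by omega, fun x h1 h2 => hbelow x h1 (by omega), fun i h1 h2 => ?_⟩
  by_contra! hlt
  -- `w - 1` and `i` would be two different cyclic ascents
  have hascent : ∀ j, 1 ≤ j → j < n → f j < f (j + 1) →
      j ∈ (Icc 1 n).filter fun i => f i < nxt n f i := fun j h1 h2 hj => by
    rw [Finset.mem_filter, mem_Icc, nxt, if_neg (by omega)]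
    exact ⟨⟨h1, by omega⟩, hj⟩
  have hfw1 := (hf.1.1 w hw1 hwn).1
  have hw_ascent : f (w - 1) < f (w - 1 + 1) := by
    rw [hbelow _ (by omega) (by omega), Nat.sub_add_cancel (by omega)]
    omega
  have := card_le_one.mp ha (w - 1) (hascent _ (by omega) (by omega) hw_ascent) i
    (hascent i (by omega) h2 hlt)
  omega

lemma exists_mapOfSet_eq (hf : f ∈ Dn n) (ha : AntiCyclic n f) :
    ∃ S ⊆ Icc 1 n, mapOfSet n S = f := by
  obtain ⟨k, hk, hone, hanti⟩ := exists_eq_one_then_nonincreasing hf ha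
  have hbound : ∀ m < k, 1 ≤ f (n - m) ∧ f (n - m) ≤ n - m := fun m hm =>
    ⟨(hf.1.1 _ (by omega) (by omega)).1, hf.2 _ (by omega) (by omega)⟩
  set g : ℕ → ℕ := fun m => f (n - m) + m
  have hg : StrictMonoOn g (Set.Iio k) := by
    refine strictMonoOn_of_lt_add_one Set.ordConnected_Iio fun m _ _ hm1 => ?_
    rw [Set.mem_Iio] at hm1
    have := hanti (n - (m + 1)) (by omega) (by omega)
    rw [show n - (m + 1) + 1 = n - m by omega] at this
    simp only [g]
    omega
  have hS : (range k).image g ⊆ Icc 1 n := fun y hy => by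
    obtain ⟨m, hm, rfl⟩ := mem_image.mp hy
    have := hbound m (mem_range.mp hm)
    exact mem_Icc.mpr ⟨by simp only [g]; omega, by simp only [g]; omega⟩
  have hcard : #((range k).image g) = k := card_image_range_of_strictMonoOn hg
  refine ⟨_, hS, funext fun x => ?_⟩
  by_cases hx : x = 0 ∨ n < x
  · rw [mapOfSet, if_pos hx, hf.1.2 x (by omega)]
  by_cases hxk : n - x < k
  · obtain ⟨m, rfl⟩ : ∃ m, x = n - m := ⟨n - x, by omega⟩
    rw [mapOfSet_sub hS (by omega), nth_image_range hg (by omega)]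
    simp only [g]
    omega
  · rw [mapOfSet_eq_one (by omega) (by omega) (by omega), hone x (by omega) (by omega)]

end Surjectivity

lemma rdstar_eq_image (n : ℕ) :
    RDstar n = mapOfSet n '' ↑((Icc 1 n).powerset.filter fun S => 2 ≤ #(rises (insert 0 S) n)) := by
  ext f
  simp only [coe_filter, mem_powerset, Set.mem_image, Set.mem_ofPred_eq]
  constructor
  · rintro ⟨hD, ha, hnc⟩
    obtain ⟨S, hS, rfl⟩ := exists_mapOfSet_eq hD ha
    rw [cyclic_mapOfSet_iff hS, not_le] at hnc
    exact ⟨S, ⟨hS, hnc⟩, rfl⟩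
  · rintro ⟨S, ⟨hS, h2⟩, rfl⟩
    exact ⟨mapOfSet_mem_Dn hS, antiCyclic_mapOfSet hS, by rw [cyclic_mapOfSet_iff hS]; omega⟩

theorem card_rdstar_general (n : ℕ) :
    (RDstar n).ncard = 2 ^ n - (n ^ 3 + 5 * n + 6) / 6 := by
  have hinj : Set.InjOn (mapOfSet n)
      ↑((Icc 1 n).powerset.filter fun S => 2 ≤ #(rises (insert 0 S) n)) := by
    refine mapOfSet_injOn.mono fun S hS => ?_
    simp only [coe_filter, mem_powerset, Set.mem_ofPred_eq] at hS
    exact ⟨hS.1, card_pos.mp (by omega)⟩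
  rw [rdstar_eq_image, hinj.ncard_image, Set.ncard_coe_finset, card_filter_two_le_card_rises,
    card_powerset_filter_four_le_card]

theorem card_rdstar (n : ℕ) (hn : 4 ≤ n) :
    (RDstar n).ncard = 2 ^ n - (n ^ 3 + 5 * n + 6) / 6 :=
  card_rdstar_general n

end ORDPaper
end
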